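/- For every τ in the upper half-plane with Im τ ≥ 2, one has |(Δ(τ) − q)/q²| < 3340, where q = e^{2πiτ}. -/

import Mathlib

open Complex

noncomputable section

/-- `sigma' k n = ∑_{d ∣ n} d^k`, the sum of the k-th powers of the positive divisors of n. -/
def sigma' (k n : ℕ) : ℕ := ∑ d ∈ n.divisors, d ^ k

/-- `qpar τ = e^{2πiτ}`. -/
def qpar (τ : ℂ) : ℂ := Complex.exp (2 * Real.pi * Complex.I * τ)

/-- The quasimodular Eisenstein series `E₂(τ) = 1 - 24 ∑_{n≥1} σ₁(n) qⁿ`. -/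
def E2 (τ : ℂ) : ℂ := 1 - 24 * ∑' n : ℕ, (sigma' 1 (n + 1) : ℂ) * qpar τ ^ (n + 1)

/-- The Eisenstein series `E₄(τ) = 1 + 240 ∑_{n≥1} σ₃(n) qⁿ`. -/
def E4 (τ : ℂ) : ℂ := 1 + 240 * ∑' n : ℕ, (sigma' 3 (n + 1) : ℂ) * qpar τ ^ (n + 1)

/-- The Eisenstein series `E₆(τ) = 1 - 504 ∑_{n≥1} σ₅(n) qⁿ`. -/
def E6 (τ : ℂ) : ℂ := 1 - 504 * ∑' n : ℕ, (sigma' 5 (n + 1) : ℂ) * qpar τ ^ (n + 1)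

/-- The modular discriminant `Δ = (E₄³ - E₆²)/1728`. -/
def Δ' (τ : ℂ) : ℂ := (E4 τ ^ 3 - E6 τ ^ 2) / 1728

/-- The modular j-invariant `j = E₄³/Δ`. -/
def jinv (τ : ℂ) : ℂ := E4 τ ^ 3 / Δ' τ

/-- `χ = E₂E₄E₆/Δ`. -/
def χ' (τ : ℂ) : ℂ := E2 τ * E4 τ * E6 τ / Δ' τ

/-- `ξ = E₄E₆/Δ`. -/
def ξ' (τ : ℂ) : ℂ := E4 τ * E6 τ / Δ' τ

/-- The almost holomorphic modular function `χ*(τ) = χ(τ) - (3/(π Im τ)) ξ(τ)`. -/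
def χstar (τ : ℂ) : ℂ := χ' τ - (3 / (Real.pi * τ.im) : ℝ) * ξ' τ

/-- `τ` lies in the upper half-plane and satisfies `aτ² + bτ + c = 0` where
`a > 0` and `gcd(a,b,c) = 1`. -/
def QuadPoint (τ : ℂ) (a b c : ℤ) : Prop :=
  0 < τ.im ∧ 0 < a ∧ Int.gcd (Int.gcd a b) c = 1 ∧
    (a : ℂ) * τ ^ 2 + (b : ℂ) * τ + (c : ℂ) = 0

/-- `τ` is a quadratic point of the upper half-plane. -/
def IsQuadratic (τ : ℂ) : Prop := ∃ a b c : ℤ, QuadPoint τ a b c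

/-- `τ` is a quadratic point of discriminant `D = b² - 4ac`. -/
def HasDisc (τ : ℂ) (D : ℤ) : Prop :=
  ∃ a b c : ℤ, QuadPoint τ a b c ∧ D = b ^ 2 - 4 * a * c

/-- Membership in the closed standard fundamental domain
`F = {z ∈ ℍ : |z| ≥ 1, -1/2 ≤ Re z ≤ 1/2}`. -/
def inF (τ : ℂ) : Prop :=
  0 < τ.im ∧ 1 ≤ ‖τ‖ ∧ -(1 / 2) ≤ τ.re ∧ τ.re ≤ 1 / 2

/-- `τ` and `τ'` lie in the same `SL₂(ℤ)`-orbit under Möbius transformations. -/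
def MoebiusEquiv (τ τ' : ℂ) : Prop :=
  ∃ γ : Matrix.SpecialLinearGroup (Fin 2) ℤ,
    τ' = ((γ.1 0 0 : ℂ) * τ + (γ.1 0 1 : ℂ)) / ((γ.1 1 0 : ℂ) * τ + (γ.1 1 1 : ℂ))

/-!
Write `E₄ = 1 + 240 S₃(q)` and `E₆ = 1 - 504 S₅(q)` with `S_k(q) = ∑ σ_k(n) qⁿ`. The crude bound
`σ_k(n + 1) ≤ 2^{(k+1)n}` makes `S_k(q) - q` a geometric tail of size `O(|q|²)` once `|q|` is small,
and `Im τ ≥ 2` gives `|q| = e^{-2π Im τ} ≤ 1/128`. In `E₄³ - E₆² = 1728 q + …` every remaining term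
is then `O(|q|²)`, with a constant well below `1728 · 3340`.
-/

open ArithmeticFunction
open scoped ArithmeticFunction.sigma

lemma sigma'_eq_sigma (k n : ℕ) : sigma' k n = σ k n := sigma_apply.symm

lemma sigma'_succ_le_two_pow (k n : ℕ) : sigma' k (n + 1) ≤ 2 ^ ((k + 1) * n) := by
  rw [sigma'_eq_sigma, pow_mul']
  exact (sigma_le_pow_succ k _).trans (Nat.pow_le_pow_left Nat.lt_two_pow_self _)

def divisorQSeries (k : ℕ) (x : ℂ) : ℂ := ∑' n : ℕ, (sigma' k (n + 1) : ℂ) * x ^ (n + 1)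

lemma Δ'_eq_divisorQSeries (τ : ℂ) :
    Δ' τ = ((1 + 240 * divisorQSeries 3 (qpar τ)) ^ 3
      - (1 - 504 * divisorQSeries 5 (qpar τ)) ^ 2) / 1728 :=
  rfl

lemma divisorQSeries_eq_add {k : ℕ} {x : ℂ} (hx : 2 ^ (k + 2) * ‖x‖ ≤ 1) :
    ∃ R, divisorQSeries k x = x + R ∧ ‖R‖ ≤ 2 ^ (k + 2) * ‖x‖ ^ 2 := by
  set M : ℝ := 2 ^ (k + 1) with hM
  have hMx : M * ‖x‖ ≤ 1 / 2 := by rw [pow_succ] at hx; linarith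
  have hterm : ∀ n : ℕ, ‖(sigma' k (n + 2) : ℂ) * x ^ (n + 2)‖ ≤ M * ‖x‖ ^ 2 * (1 / 2) ^ n := by
    intro n
    have hσ : (sigma' k (n + 2) : ℝ) ≤ M ^ (n + 1) := by
      rw [hM, ← pow_mul]
      exact_mod_cast sigma'_succ_le_two_pow k (n + 1)
    calc ‖(sigma' k (n + 2) : ℂ) * x ^ (n + 2)‖ = sigma' k (n + 2) * ‖x‖ ^ (n + 2) := by simp
      _ ≤ M ^ (n + 1) * ‖x‖ ^ (n + 2) := by gcongr
      _ = M * ‖x‖ ^ 2 * (M * ‖x‖) ^ n := by ring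
      _ ≤ M * ‖x‖ ^ 2 * (1 / 2) ^ n := by gcongr
  have hsum : HasSum (fun n : ℕ ↦ M * ‖x‖ ^ 2 * (1 / 2) ^ n) (M * ‖x‖ ^ 2 * 2) :=
    hasSum_geometric_two.mul_left _
  have hsplit := tsum_eq_zero_add' (f := fun n ↦ (sigma' k (n + 1) : ℂ) * x ^ (n + 1))
    (hsum.summable.of_norm_bounded hterm)
  refine ⟨∑' n : ℕ, (sigma' k (n + 2) : ℂ) * x ^ (n + 2), ?_, ?_⟩
  · rw [divisorQSeries, hsplit]
    simp [sigma'_eq_sigma]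
  calc _ ≤ M * ‖x‖ ^ 2 * 2 := tsum_of_norm_bounded hsum hterm
    _ = 2 ^ (k + 2) * ‖x‖ ^ 2 := by ring

lemma norm_qpar (τ : ℂ) : ‖qpar τ‖ = Real.exp (-2 * Real.pi * τ.im) := by
  simp [qpar, Complex.norm_exp]

lemma norm_qpar_le {τ : ℂ} (hτ : 2 ≤ τ.im) : ‖qpar τ‖ ≤ 1 / 128 :=
  calc ‖qpar τ‖ ≤ Real.exp (-1) ^ 7 := by
        rw [norm_qpar, ← Real.exp_nat_mul]
        exact Real.exp_le_exp.mpr (by push_cast; nlinarith [Real.pi_gt_three])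
    _ ≤ (1 / 2) ^ 7 := by gcongr; exact Real.exp_neg_one_lt_half.le
    _ = 1 / 128 := by norm_num

lemma norm_discriminant_sub_le {x R₄ R₆ : ℂ} (hx : ‖x‖ ≤ 1 / 128)
    (h₄ : ‖R₄‖ ≤ 128 * ‖x‖ ^ 2) (h₆ : ‖R₆‖ ≤ 128 * ‖x‖ ^ 2) :
    ‖((1 + 240 * (x + R₄)) ^ 3 - (1 - 504 * (x + R₆)) ^ 2) / 1728 - x‖ ≤ 1620 * ‖x‖ ^ 2 := by
  set r := ‖x‖
  have hr : 0 ≤ r := norm_nonneg x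
  have hA : ‖x + R₄‖ ≤ 2 * r := (norm_add_le _ _).trans (by nlinarith)
  have hB : ‖x + R₆‖ ≤ 2 * r := (norm_add_le _ _).trans (by nlinarith)
  have expand : ((1 + 240 * (x + R₄)) ^ 3 - (1 - 504 * (x + R₆)) ^ 2) / 1728 - x =
      (720 * R₄ + 1008 * R₆ + 172800 * (x + R₄) ^ 2 + 13824000 * (x + R₄) ^ 3
        - 254016 * (x + R₆) ^ 2) / 1728 := by
    ring
  have htri : ‖720 * R₄ + 1008 * R₆ + 172800 * (x + R₄) ^ 2 + 13824000 * (x + R₄) ^ 3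
        - 254016 * (x + R₆) ^ 2‖ ≤ 720 * (128 * r ^ 2) + 1008 * (128 * r ^ 2)
        + 172800 * (2 * r) ^ 2 + 13824000 * (2 * r) ^ 3 + 254016 * (2 * r) ^ 2 := by
    refine norm_sub_le_of_le (norm_add_le_of_le (norm_add_le_of_le
      (norm_add_le_of_le ?_ ?_) ?_) ?_) ?_ <;>
    · simp only [norm_mul, norm_pow, Complex.norm_ofNat]; gcongr
  have hr3 : r ^ 3 ≤ r ^ 2 / 128 := by nlinarith [sq_nonneg r]
  rw [expand, norm_div, Complex.norm_ofNat, div_le_iff₀ (by norm_num)]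
  nlinarith

/-- For `Im τ ≥ 2`, `|(Δ(τ) - q)/q²| < 3340`. -/
theorem disc_tail_bound_strong (τ : ℂ) (hτ : 2 ≤ τ.im) :
    ‖(Δ' τ - qpar τ) / qpar τ ^ 2‖ < 3340 := by
  have hq : ‖qpar τ‖ ≤ 1 / 128 := norm_qpar_le hτ
  have hq0 : 0 < ‖qpar τ‖ := norm_pos_iff.mpr (Complex.exp_ne_zero _)
  obtain ⟨R₄, hS₃, hR₄⟩ := divisorQSeries_eq_add (k := 3) (x := qpar τ) (by norm_num; linarith)
  obtain ⟨R₆, hS₅, hR₆⟩ := divisorQSeries_eq_add (k := 5) (x := qpar τ) (by norm_num; linarith)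
  have key : ‖Δ' τ - qpar τ‖ ≤ 1620 * ‖qpar τ‖ ^ 2 := by
    rw [Δ'_eq_divisorQSeries, hS₃, hS₅]
    exact norm_discriminant_sub_le hq (hR₄.trans (by gcongr; norm_num)) (hR₆.trans_eq (by norm_num))
  rw [norm_div, norm_pow, div_lt_iff₀ (by positivity)]
  nlinarith
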